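/- Let $(e^{tA})_{t \ge 0}$ and $(e^{tB})_{t \ge 0}$ be real $C_0$-semigroups on a complex Banach lattice $E$ and let $u \ge 0$ be a quasi-interior point of $E$. Assume: (a) there exists $t_1 \ge 0$ such that $e^{t_1 A} E \subseteq E_u$; (b) for each $0 \lneq f \in E$ there exist $t_0 \ge 0$ and $c > 0$ with $e^{tB} f \ge c u$ for all $t \ge t_0$; (c) $e^{tA} f \to 0$ for every $f \in E$ as $t \to \infty$. Then for each nonzero $f \in E$, there exist $\tau \ge 0$ and $c' > 0$ such that $e^{tB}|f| - |e^{tA} f| \ge c' u$ for all $t \ge \tau$. In particular, $|e^{tA} f| \le e^{tB}|f|$ for all $t \ge \tau$. -/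

import Mathlib

/-!
Since `e^{t₁A}` maps `E` into the principal ideal `E_u`, a Baire category argument makes it
continuous from `E` to `E_u`: some ball is mapped into an order interval `[-K u, K u]`, and by
homogeneity `|e^{t₁A} g| ≤ ε u` once `‖g‖` is small. Writing `e^{tA} f = e^{t₁A} e^{(t - t₁)A} f`
and using `e^{tA} f → 0`, eventually `|e^{tA} f| ≤ (c/2) u`, while `e^{tB}|f| ≥ c u` by strong
positivity; the difference is then at least `(c/2) u`.
-/

open Filter Topology

/-- Membership in the principal ideal `E_u` generated by `u`. -/
def InPrincipalIdeal {E : Type*} [NormedAddCommGroup E] [Lattice E] [HasSolidNorm E] [IsOrderedAddMonoid E] [NormedSpace ℝ E]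
    (u x : E) : Prop :=
  ∃ c : ℝ, 0 < c ∧ |x| ≤ c • u

lemma nonneg_of_two_pow_nsmul_nonneg {α : Type*} [Lattice α] [AddGroup α] [AddLeftMono α]
    [AddRightMono α] {a : α} (k : ℕ) (h : 0 ≤ 2 ^ k • a) : 0 ≤ a := by
  induction k generalizing a with
  | zero => simpa using h
  | succ k ih => exact nsmul_two_semiclosed (ih (by rwa [pow_succ', mul_nsmul] at h))

lemma abs_smul_le_smul_abs {𝕜 β : Type*} [Ring 𝕜] [PartialOrder 𝕜] [Lattice β] [AddCommGroup β]
    [IsOrderedAddMonoid β] [Module 𝕜 β] [PosSMulMono 𝕜 β] {c : 𝕜} (hc : 0 ≤ c) (x : β) :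
    |c • x| ≤ c • |x| :=
  abs_le'.2 ⟨smul_le_smul_of_nonneg_left (le_abs_self x) hc,
    by rw [← smul_neg]; exact smul_le_smul_of_nonneg_left (neg_le_abs x) hc⟩

section NormedLattice

variable {E : Type*} [NormedAddCommGroup E] [Lattice E] [HasSolidNorm E] [IsOrderedAddMonoid E]
  [NormedSpace ℝ E]

/-- Nothing ties `•` to the order a priori; but the positive cone is closed and stable under
halving, and the dyadic numbers are dense. -/
theorem smul_nonneg_of_hasSolidNorm {c : ℝ} {x : E} (hc : 0 ≤ c) (hx : 0 ≤ x) : 0 ≤ c • x := by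
  have hdyadic : ∀ k : ℕ, 0 ≤ ((⌊c * 2 ^ k⌋₊ : ℝ) / 2 ^ k) • x := fun k ↦ by
    refine nonneg_of_two_pow_nsmul_nonneg k ?_
    rw [← Nat.cast_smul_eq_nsmul ℝ, smul_smul, Nat.cast_pow, Nat.cast_ofNat,
      mul_div_cancel₀ _ (by positivity), Nat.cast_smul_eq_nsmul]
    exact nsmul_nonneg hx _
  have hlim : Tendsto (fun k : ℕ ↦ ((⌊c * 2 ^ k⌋₊ : ℝ) / 2 ^ k)) atTop (𝓝 c) :=
    (tendsto_nat_floor_mul_div_atTop hc).comp (tendsto_pow_atTop_atTop_of_one_lt one_lt_two)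
  exact isClosed_nonneg.mem_of_tendsto (hlim.smul_const x) (Eventually.of_forall hdyadic)

instance HasSolidNorm.posSMulMono : PosSMulMono ℝ E :=
  PosSMulMono.of_smul_nonneg fun _ hc _ hx ↦ smul_nonneg_of_hasSolidNorm hc hx

variable [CompleteSpace E] {u : E}

theorem exists_pos_forall_norm_lt_abs_le_smul (hu : 0 ≤ u) (A : E →L[ℝ] E)
    (hA : ∀ g, InPrincipalIdeal u (A g)) :
    ∃ r > (0 : ℝ), ∃ K > (0 : ℝ), ∀ h : E, ‖h‖ < r → |A h| ≤ K • u := by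
  set C : ℕ → Set E := fun n ↦ {g | |A g| ≤ ((n : ℝ) + 1) • u}
  have hC_closed : ∀ n, IsClosed (C n) := fun n ↦
    isClosed_le (A.continuous.sup A.continuous.neg) continuous_const
  have hC_cover : ⋃ n, C n = Set.univ := Set.eq_univ_of_forall fun g ↦ by
    obtain ⟨c, -, hc⟩ := hA g
    obtain ⟨n, hn⟩ := exists_nat_ge c
    exact Set.mem_iUnion.2 ⟨n, hc.trans (smul_le_smul_of_nonneg_right (by linarith) hu)⟩
  obtain ⟨n, x₀, hx₀⟩ := nonempty_interior_of_iUnion_of_closed hC_closed hC_cover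
  obtain ⟨r, hr, hball⟩ := Metric.isOpen_iff.1 isOpen_interior x₀ hx₀
  refine ⟨r, hr, 2 * ((n : ℝ) + 1), by positivity, fun h hh ↦ ?_⟩
  have hx₀h : x₀ + h ∈ C n := interior_subset (hball (by simpa [dist_eq_norm] using hh))
  have hx₀' : x₀ ∈ C n := interior_subset hx₀
  calc |A h| = |A (x₀ + h) + -A x₀| := by rw [map_add, add_neg_cancel_comm]
    _ ≤ |A (x₀ + h)| + |A x₀| := (abs_add_le _ _).trans_eq (by rw [abs_neg])
    _ ≤ ((n : ℝ) + 1) • u + ((n : ℝ) + 1) • u := add_le_add hx₀h hx₀'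
    _ = (2 * ((n : ℝ) + 1)) • u := by rw [← add_smul, two_mul]

theorem eventually_abs_le_smul_of_tendsto_zero {α : Type*} {l : Filter α} (hu : 0 ≤ u)
    (A : E →L[ℝ] E) (hA : ∀ g, InPrincipalIdeal u (A g)) {g : α → E} (hg : Tendsto g l (𝓝 0))
    {ε : ℝ} (hε : 0 < ε) : ∀ᶠ x in l, |A (g x)| ≤ ε • u := by
  obtain ⟨r, hr, K, hK, hbound⟩ := exists_pos_forall_norm_lt_abs_le_smul hu A hA
  set s := K / ε
  have hs : 0 < s := div_pos hK hε
  have hsg : ∀ᶠ x in l, ‖s • g x‖ < r :=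
    (hg.const_smul s).norm.eventually (gt_mem_nhds (by simpa using hr))
  filter_upwards [hsg] with x hx
  calc |A (g x)| = |s⁻¹ • A (s • g x)| := by rw [map_smul, inv_smul_smul₀ hs.ne']
    _ ≤ s⁻¹ • |A (s • g x)| := abs_smul_le_smul_abs (inv_nonneg.2 hs.le) _
    _ ≤ s⁻¹ • (K • u) := smul_le_smul_of_nonneg_left (hbound _ hx) (inv_nonneg.2 hs.le)
    _ = ε • u := by rw [smul_smul, inv_div, div_mul_cancel₀ _ hK.ne']

end NormedLattice

/-- Here `T t = e^{tA}` and `S t = e^{tB}`. -/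
theorem stmt7_general {E : Type*} [NormedAddCommGroup E] [Lattice E] [HasSolidNorm E] [IsOrderedAddMonoid E] [NormedSpace ℝ E] [CompleteSpace E]
    (u : E) (hu : 0 ≤ u)
    (T S : ℝ → E →L[ℝ] E)
    (hTsemi : ∀ s t : ℝ, 0 ≤ s → 0 ≤ t → T (s + t) = (T s).comp (T t))
    -- (a) smoothing: `e^{t₁ A} E ⊆ E_u` for some `t₁ ≥ 0`:
    (ha : ∃ t1 ≥ (0:ℝ), ∀ f : E, InPrincipalIdeal u (T t1 f))
    -- (b) individual eventual strong positivity of `(e^{tB})`: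
    (hb : ∀ f : E, 0 ≤ f → f ≠ 0 → ∃ t0 ≥ (0:ℝ), ∃ c > (0:ℝ), ∀ t ≥ t0, c • u ≤ S t f)
    -- (c) `(e^{tA})` converges strongly to `0`:
    (hc : ∀ f : E, Tendsto (fun t => T t f) atTop (𝓝 0)) :
    ∀ f : E, f ≠ 0 → ∃ τ ≥ (0:ℝ), ∃ c' > (0:ℝ), ∀ t ≥ τ,
      c' • u ≤ S t |f| - |T t f| ∧ |T t f| ≤ S t |f| := by
  intro f hf
  obtain ⟨t1, ht1, hT1⟩ := ha
  obtain ⟨t0, -, c, hc_pos, hS⟩ := hb |f| (abs_nonneg f)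
    (by rwa [← norm_ne_zero_iff, norm_abs_eq_norm, norm_ne_zero_iff])
  have hshift : Tendsto (fun t ↦ T (t - t1) f) atTop (𝓝 0) :=
    (hc f).comp (tendsto_atTop_add_const_right _ (-t1) tendsto_id)
  have hsmall : ∀ᶠ t in atTop, |T t f| ≤ (c / 2) • u := by
    filter_upwards [eventually_abs_le_smul_of_tendsto_zero hu (T t1) hT1 hshift (half_pos hc_pos),
      eventually_ge_atTop t1] with t ht htt1
    rwa [← ContinuousLinearMap.comp_apply, ← hTsemi _ _ ht1 (sub_nonneg.2 htt1),
      add_sub_cancel] at ht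
  obtain ⟨τ, hτ⟩ := eventually_atTop.1 (hsmall.and (eventually_ge_atTop t0))
  refine ⟨max τ 0, le_max_right _ _, c / 2, half_pos hc_pos, fun t ht ↦ ?_⟩
  obtain ⟨hTt, htt0⟩ := hτ t (le_of_max_le_left ht)
  have hgap : (c / 2) • u ≤ S t |f| - |T t f| :=
    calc (c / 2) • u = c • u - (c / 2) • u := by rw [← sub_smul, sub_half]
      _ ≤ S t |f| - |T t f| := sub_le_sub (hS t htt0) hTt
  exact ⟨hgap, sub_nonneg.1 ((smul_nonneg (half_pos hc_pos).le hu).trans hgap)⟩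

/-- Proposition 3.2: individual eventual domination of semigroups.  Here `T t = e^{tA}`
and `S t = e^{tB}` are (real) `C₀`-semigroups on a Banach lattice `E`. -/
theorem stmt7 {E : Type*} [NormedAddCommGroup E] [Lattice E] [HasSolidNorm E] [IsOrderedAddMonoid E] [NormedSpace ℝ E] [CompleteSpace E]
    (u : E) (hu : 0 ≤ u) (huq : Dense {x : E | InPrincipalIdeal u x})
    (T S : ℝ → E →L[ℝ] E)
    (hT0 : T 0 = 1) (hS0 : S 0 = 1)
    (hTsemi : ∀ s t : ℝ, 0 ≤ s → 0 ≤ t → T (s + t) = (T s).comp (T t))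
    (hSsemi : ∀ s t : ℝ, 0 ≤ s → 0 ≤ t → S (s + t) = (S s).comp (S t))
    (hTcont : ∀ f : E, ContinuousOn (fun t => T t f) (Set.Ici 0))
    (hScont : ∀ f : E, ContinuousOn (fun t => S t f) (Set.Ici 0))
    -- (a) smoothing: `e^{t₁ A} E ⊆ E_u` for some `t₁ ≥ 0`:
    (ha : ∃ t1 ≥ (0:ℝ), ∀ f : E, InPrincipalIdeal u (T t1 f))
    -- (b) individual eventual strong positivity of `(e^{tB})`:
    (hb : ∀ f : E, 0 ≤ f → f ≠ 0 → ∃ t0 ≥ (0:ℝ), ∃ c > (0:ℝ), ∀ t ≥ t0, c • u ≤ S t f)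
    -- (c) `(e^{tA})` converges strongly to `0`:
    (hc : ∀ f : E, Tendsto (fun t => T t f) atTop (𝓝 0)) :
    ∀ f : E, f ≠ 0 → ∃ τ ≥ (0:ℝ), ∃ c' > (0:ℝ), ∀ t ≥ τ,
      c' • u ≤ S t |f| - |T t f| ∧ |T t f| ≤ S t |f| :=
  stmt7_general u hu T S hTsemi ha hb hc
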